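/- arXiv:1411.4392 — 4 statements merged into one kernel-verified Lean document; each statement's English description precedes it below -/
import Mathlib

section
/- Let A be a ring, e ∈ A an idempotent, and B = A/AeA. Then the sequence of additive maps eAe/[eAe,eAe] → A/[A,A] → B/[B,B] → 0 induced by the inclusion eAe ⊆ A and the projection A → B is exact; i.e. the second map is surjective and its kernel is exactly the image of the first map. -/
/-- The additive subgroup of a ring generated by all commutators `a*b - b*a`. -/
def commutatorAddSubgroup (R : Type*) [Ring R] : AddSubgroup R :=
  AddSubgroup.closure {x : R | ∃ a b : R, x = a * b - b * a}

/-! The kernel of `A/[A,A] → B/[B,B]` is the image of `π⁻¹[B,B] = [A,A] + AeA`, and modulo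
`[A,A]` every generator of `AeA` lies in `eAe`:
`a e b = e (b a) e + [a e, e b]` because `e` is idempotent. -/

theorem commutatorAddSubgroup_map_of_surjective {R S : Type*} [Ring R] [Ring S] (f : R →+* S)
    (hf : Function.Surjective f) :
    (commutatorAddSubgroup R).map f.toAddMonoidHom = commutatorAddSubgroup S := by
  rw [commutatorAddSubgroup, AddMonoidHom.map_closure, commutatorAddSubgroup]
  congr 1
  ext x
  constructor
  · rintro ⟨_, ⟨a, b, rfl⟩, rfl⟩
    exact ⟨f a, f b, by simp⟩
  · rintro ⟨c, d, rfl⟩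
    obtain ⟨a, rfl⟩ := hf c
    obtain ⟨b, rfl⟩ := hf d
    exact ⟨_, ⟨a, b, rfl⟩, by simp⟩

theorem closure_mul_idem_mul_sup_commutatorAddSubgroup {A : Type*} [Ring A] {e : A}
    (he : IsIdempotentElem e) :
    AddSubgroup.closure {y : A | ∃ a b : A, y = a * e * b} ⊔ commutatorAddSubgroup A =
      AddSubgroup.closure {y : A | ∃ a : A, y = e * a * e} ⊔ commutatorAddSubgroup A := by
  apply le_antisymm
  · refine sup_le ?_ le_sup_right
    rw [AddSubgroup.closure_le]
    rintro _ ⟨a, b, rfl⟩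
    have hcomm : a * e * (e * b) - e * b * (a * e) ∈ commutatorAddSubgroup A :=
      AddSubgroup.subset_closure ⟨a * e, e * b, rfl⟩
    have hdecomp : a * e * b = e * (b * a) * e + (a * e * (e * b) - e * b * (a * e)) := by
      nth_rw 1 [← he.eq]
      noncomm_ring
    rw [hdecomp]
    exact add_mem (AddSubgroup.mem_sup_left (AddSubgroup.subset_closure ⟨b * a, rfl⟩))
      (AddSubgroup.mem_sup_right hcomm)
  · refine sup_le ?_ le_sup_right
    rw [AddSubgroup.closure_le]
    rintro _ ⟨a, rfl⟩
    exact AddSubgroup.mem_sup_left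
      (AddSubgroup.subset_closure ⟨e, a * e, by rw [he.eq, mul_assoc]⟩)

/-- Let `A` be a ring, `e ∈ A` an idempotent, and `B = A/AeA`.  Then the sequence
`eAe/[eAe,eAe] → A/[A,A] → B/[B,B] → 0` is exact: the second map is surjective and
its kernel is exactly the image of the first map (i.e. the image in `A/[A,A]` of
the set `eAe`). -/
theorem stmt0 {A B : Type*} [Ring A] [Ring B] (e : A) (he : e * e = e)
    (π : A →+* B) (hsurj : Function.Surjective π)
    (hker : ∀ x : A, π x = 0 ↔ x ∈ AddSubgroup.closure {y : A | ∃ a b : A, y = a * e * b})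
    (hmap : commutatorAddSubgroup A ≤ (commutatorAddSubgroup B).comap π.toAddMonoidHom) :
    Function.Surjective
      (QuotientAddGroup.map (commutatorAddSubgroup A) (commutatorAddSubgroup B)
        π.toAddMonoidHom hmap) ∧
    AddMonoidHom.ker
      (QuotientAddGroup.map (commutatorAddSubgroup A) (commutatorAddSubgroup B)
        π.toAddMonoidHom hmap) =
    AddSubgroup.map (QuotientAddGroup.mk' (commutatorAddSubgroup A))
      (AddSubgroup.closure {y : A | ∃ a : A, y = e * a * e}) := by
  refine ⟨QuotientAddGroup.map_surjective_of_surjective _ _ _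
    ((QuotientAddGroup.mk'_surjective _).comp hsurj) hmap, ?_⟩
  have hkerπ : π.toAddMonoidHom.ker = AddSubgroup.closure {y : A | ∃ a b : A, y = a * e * b} :=
    AddSubgroup.ext hker
  rw [QuotientAddGroup.ker_map, ← commutatorAddSubgroup_map_of_surjective π hsurj,
    AddSubgroup.comap_map_eq, sup_comm, hkerπ,
    closure_mul_idem_mul_sup_commutatorAddSubgroup he, AddSubgroup.map_sup,
    QuotientAddGroup.map_mk'_self, sup_bot_eq]
end

section
/- For k-algebras A and B over a commutative ring k, the canonical map tr(A) ⊗_k tr(B) → tr(A ⊗_k B) sending (a + [A,A]) ⊗ (b + [B,B]) to a⊗b + [A⊗B, A⊗B] is a well-defined isomorphism of k-modules, where tr(R) = R/[R,R]. -/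
/-! Tensoring is right exact, so `tr A ⊗ tr B ≅ (A ⊗ B) ⧸ ([A, A] ⊗ B + A ⊗ [B, B])`. That
submodule is `[A ⊗ B, A ⊗ B]`: one inclusion from `[a, a'] ⊗ b = [a ⊗ b, a' ⊗ 1]` (and its mirror
image), the other from `[a ⊗ b, a' ⊗ b'] = [a, a'] ⊗ b b' + a' a ⊗ [b, b']`, which suffices because
the commutator is bilinear and pure tensors span `A ⊗ B`. -/

open TensorProduct

/-- The `k`-submodule of an algebra spanned by all commutators `a*b - b*a`;
the cocenter (trace) is the quotient by this submodule. -/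
def commutatorSubmodule (k R : Type*) [CommRing k] [Ring R] [Algebra k R] :
    Submodule k R :=
  Submodule.span k {x : R | ∃ a b : R, x = a * b - b * a}

section Ring

variable {k R : Type*} [CommRing k] [Ring R] [Algebra k R]

lemma mul_sub_mul_mem_commutatorSubmodule (a b : R) :
    a * b - b * a ∈ commutatorSubmodule k R :=
  Submodule.subset_span ⟨a, b, rfl⟩

lemma commutatorSubmodule_le_comap {S : Type*} [Ring S] [Algebra k S] (f : R →ₗ[k] S)
    (hf : ∀ a b, f (a * b - b * a) ∈ commutatorSubmodule k S) :
    commutatorSubmodule k R ≤ (commutatorSubmodule k S).comap f :=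
  Submodule.span_le.2 fun _ ⟨a, b, hx⟩ => hx ▸ hf a b

lemma commutatorSubmodule_le_of_span_eq_top {s : Set R} (hs : Submodule.span k s = ⊤)
    {p : Submodule k R} (hp : ∀ a ∈ s, ∀ b ∈ s, a * b - b * a ∈ p) :
    commutatorSubmodule k R ≤ p := by
  let c : R →ₗ[k] R →ₗ[k] R := LinearMap.mul k R - (LinearMap.mul k R).flip
  have hc : Submodule.map₂ c ⊤ ⊤ ≤ p := by
    rw [← hs, Submodule.map₂_span_span, Submodule.span_le]
    rintro _ ⟨a, ha, b, hb, rfl⟩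
    exact hp a ha b hb
  refine Submodule.span_le.2 fun _ ⟨a, b, hx⟩ => hx ▸ ?_
  exact hc (Submodule.apply_mem_map₂ c Submodule.mem_top Submodule.mem_top)

end Ring

section TensorProduct

variable {k A B : Type*} [CommRing k] [Ring A] [Ring B] [Algebra k A] [Algebra k B]

lemma tmul_mem_commutatorSubmodule_of_mem_left {x : A} (hx : x ∈ commutatorSubmodule k A)
    (b : B) : x ⊗ₜ[k] b ∈ commutatorSubmodule k (A ⊗[k] B) := by
  refine commutatorSubmodule_le_comap ((TensorProduct.mk k A B).flip b) (fun a a' => ?_) hx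
  have h : (a * a' - a' * a) ⊗ₜ[k] b =
      (a ⊗ₜ[k] b) * (a' ⊗ₜ[k] (1 : B)) - (a' ⊗ₜ[k] (1 : B)) * (a ⊗ₜ[k] b) := by
    simp [sub_tmul]
  simpa [h] using mul_sub_mul_mem_commutatorSubmodule (k := k) (a ⊗ₜ[k] b) (a' ⊗ₜ[k] (1 : B))

lemma tmul_mem_commutatorSubmodule_of_mem_right (a : A) {y : B}
    (hy : y ∈ commutatorSubmodule k B) : a ⊗ₜ[k] y ∈ commutatorSubmodule k (A ⊗[k] B) := by
  refine commutatorSubmodule_le_comap (TensorProduct.mk k A B a) (fun b b' => ?_) hy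
  have h : a ⊗ₜ[k] (b * b' - b' * b) =
      (a ⊗ₜ[k] b) * ((1 : A) ⊗ₜ[k] b') - ((1 : A) ⊗ₜ[k] b') * (a ⊗ₜ[k] b) := by
    simp [tmul_sub]
  simpa [h] using mul_sub_mul_mem_commutatorSubmodule (k := k) (a ⊗ₜ[k] b) ((1 : A) ⊗ₜ[k] b')

theorem commutatorSubmodule_tensorProduct :
    commutatorSubmodule k (A ⊗[k] B) =
      LinearMap.range (map (commutatorSubmodule k A).subtype LinearMap.id) ⊔
        LinearMap.range (map LinearMap.id (commutatorSubmodule k B).subtype) := by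
  simp only [range_map, Submodule.range_subtype, LinearMap.range_id]
  apply le_antisymm
  · refine commutatorSubmodule_le_of_span_eq_top (span_tmul_eq_top k A B) ?_
    rintro _ ⟨a, b, rfl⟩ _ ⟨a', b', rfl⟩
    have h : (a ⊗ₜ[k] b) * (a' ⊗ₜ[k] b') - (a' ⊗ₜ[k] b') * (a ⊗ₜ[k] b) =
        (a * a' - a' * a) ⊗ₜ[k] (b * b') + (a' * a) ⊗ₜ[k] (b * b' - b' * b) := by
      simp only [Algebra.TensorProduct.tmul_mul_tmul, sub_tmul, tmul_sub]
      abel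
    rw [h]
    exact add_mem
      (Submodule.mem_sup_left (Submodule.apply_mem_map₂ _
        (mul_sub_mul_mem_commutatorSubmodule a a') Submodule.mem_top))
      (Submodule.mem_sup_right (Submodule.apply_mem_map₂ _
        Submodule.mem_top (mul_sub_mul_mem_commutatorSubmodule b b')))
  · refine sup_le (Submodule.map₂_le.2 fun x hx b _ => ?_) (Submodule.map₂_le.2 fun a _ y hy => ?_)
    · exact tmul_mem_commutatorSubmodule_of_mem_left hx b
    · exact tmul_mem_commutatorSubmodule_of_mem_right a hy

end TensorProduct

/-- For `k`-algebras `A` and `B`, the canonical map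
`tr(A) ⊗ tr(B) → tr(A ⊗ B)`, `(a + [A,A]) ⊗ (b + [B,B]) ↦ a⊗b + [A⊗B,A⊗B]`,
is a well-defined isomorphism of `k`-modules. -/
theorem stmt1 (k A B : Type*) [CommRing k] [Ring A] [Ring B]
    [Algebra k A] [Algebra k B] :
    ∃ f : ((A ⧸ commutatorSubmodule k A) ⊗[k] (B ⧸ commutatorSubmodule k B)) ≃ₗ[k]
        ((A ⊗[k] B) ⧸ commutatorSubmodule k (A ⊗[k] B)),
      ∀ (a : A) (b : B),
        f (Submodule.Quotient.mk a ⊗ₜ[k] Submodule.Quotient.mk b) =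
          Submodule.Quotient.mk (a ⊗ₜ[k] b) :=
  ⟨quotientTensorQuotientEquiv _ _ ≪≫ₗ
      Submodule.quotEquivOfEq _ _ commutatorSubmodule_tensorProduct.symm,
    fun _ _ => rfl⟩
end

section
/- In the degenerate affine Hecke algebra R(n) over k[ħ], the intertwiners φ_k = (x_k − x_{k+1})τ_k + ħ satisfy the braid relations: φ_k φ_{k+1} φ_k = φ_{k+1} φ_k φ_{k+1} for 1 ≤ k ≤ n−2, and φ_k φ_l = φ_l φ_k whenever |k−l| > 1. -/
/-!
Intertwiners `φ_k` and `φ_l` with `|k - l| > 1` commute because each of `x_k, x_{k+1}, τ_k, ħ`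
commutes with each of `x_l, x_{l+1}, τ_l, ħ`. For the braid relation, expand both sides and
move every `x` and `ħ` to the left of every `τ` with `τ x = x τ ± ħ`; using `τ² = 1` and the
braid relation of the `τ`'s, both sides become the same combination of the six words
`1, τ_k, τ_{k+1}, τ_k τ_{k+1}, τ_{k+1} τ_k, τ_k τ_{k+1} τ_k` with coefficients in the `x`'s and `ħ`.
-/

theorem mul_mul_eq_of_mul_eq {M : Type*} [Semigroup M] {a b c : M} (h : a * b = c) (r : M) :
    a * (b * r) = c * r := by
  rw [← mul_assoc, h]

section Intertwiner

variable {R : Type*} [Ring R]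

theorem intertwiner_braid {a b c s t h : R} (hh : ∀ r, Commute r h)
    (hab : Commute b a) (hac : Commute c a) (hbc : Commute c b)
    (hs2 : s * s = 1) (ht2 : t * t = 1) (hst : t * s * t = s * t * s)
    (hsa : s * a = b * s - h) (hsb : s * b = a * s + h) (hsc : Commute s c)
    (hta : Commute t a) (htb : t * b = c * t - h) (htc : t * c = b * t + h) :
    ((a - b) * s + h) * ((b - c) * t + h) * ((a - b) * s + h) =
      ((b - c) * t + h) * ((a - b) * s + h) * ((b - c) * t + h) := by
  have hst_assoc : t * (s * t) = s * (t * s) := by rw [← mul_assoc, hst, mul_assoc]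
  simp only [sub_mul, mul_sub, add_mul, mul_add, mul_assoc, mul_one,
    (hh a).eq, (hh b).eq, (hh c).eq, (hh s).eq, (hh t).eq,
    (hh a).left_comm, (hh b).left_comm, (hh c).left_comm, (hh s).left_comm, (hh t).left_comm,
    hab.eq, hbc.eq, hab.left_comm, hac.left_comm, hbc.left_comm, hsc.left_comm, hta.left_comm,
    hs2, ht2, hst_assoc, mul_mul_eq_of_mul_eq hsa, mul_mul_eq_of_mul_eq hsb,
    mul_mul_eq_of_mul_eq htb, mul_mul_eq_of_mul_eq htc]
  abel

theorem Commute.intertwiner_right {y a b s h : R} (ha : Commute y a)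
    (hb : Commute y b) (hs : Commute y s) (hh : Commute y h) : Commute y ((a - b) * s + h) :=
  ((ha.sub_right hb).mul_right hs).add_right hh

theorem Commute.intertwiner_left {y a b s h : R} (ha : Commute a y)
    (hb : Commute b y) (hs : Commute s y) (hh : Commute h y) : Commute ((a - b) * s + h) y :=
  (ha.symm.intertwiner_right hb.symm hs.symm hh.symm).symm

theorem commute_intertwiners {a b c d s t h : R} (hh : ∀ r, Commute r h)
    (hac : Commute a c) (had : Commute a d) (hat : Commute a t)
    (hbc : Commute b c) (hbd : Commute b d) (hbt : Commute b t)
    (hsc : Commute s c) (hsd : Commute s d) (hst : Commute s t) :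
    Commute ((a - b) * s + h) ((c - d) * t + h) :=
  .intertwiner_right (.intertwiner_left hac hbc hsc (hh c).symm)
    (.intertwiner_left had hbd hsd (hh d).symm) (.intertwiner_left hat hbt hst (hh t).symm) (hh _)

end Intertwiner

section HeckeCrossRel

variable {R : Type*} [Ring R] {hbar : R} {x τ : ℕ → R} {k l : ℕ}

/-- `τ_k x_l − x_{s_k(l)} τ_k = ħ (δ_{l,k+1} − δ_{l,k})`. -/
def HeckeCrossRel (hbar : R) (x τ : ℕ → R) (k l : ℕ) : Prop :=
  τ k * x l - x (if l = k then k + 1 else if l = k + 1 then k else l) * τ k =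
    (if l = k + 1 then hbar else 0) - (if l = k then hbar else 0)

theorem HeckeCrossRel.commute (h : HeckeCrossRel hbar x τ k l) (hlk : l ≠ k) (hlk' : l ≠ k + 1) :
    Commute (τ k) (x l) := by
  simpa [HeckeCrossRel, hlk, hlk', sub_eq_zero, commute_iff_eq] using h

theorem HeckeCrossRel.mul_self (h : HeckeCrossRel hbar x τ k k) :
    τ k * x k = x (k + 1) * τ k - hbar := by
  simpa [HeckeCrossRel, sub_eq_iff_eq_add, neg_add_eq_sub] using h

theorem HeckeCrossRel.mul_succ (h : HeckeCrossRel hbar x τ k (k + 1)) :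
    τ k * x (k + 1) = x k * τ k + hbar := by
  simpa [HeckeCrossRel, sub_eq_iff_eq_add, add_comm] using h

end HeckeCrossRel

/-- In the degenerate affine Hecke algebra `R(n)` over `k[ħ]` (stated here for any ring
containing a central element `hbar` and elements `τ_1,…,τ_{n-1}`, `x_1,…,x_n` satisfying
the defining relations), the intertwiners `φ_k = (x_k − x_{k+1})τ_k + ħ` satisfy the
braid relations: `φ_k φ_{k+1} φ_k = φ_{k+1} φ_k φ_{k+1}` for `1 ≤ k ≤ n−2`, and
`φ_k φ_l = φ_l φ_k` whenever `|k−l| > 1`. -/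
theorem stmt9 (R : Type*) [Ring R] (n : ℕ) (hbar : R) (x τ : ℕ → R)
    (hcen : ∀ r : R, hbar * r = r * hbar)
    (hxx : ∀ k l, 1 ≤ k → k ≤ n → 1 ≤ l → l ≤ n → x k * x l = x l * x k)
    (hττ : ∀ k l, 1 ≤ k → k ≤ n - 1 → 1 ≤ l → l ≤ n - 1 → k + 1 < l →
      τ k * τ l = τ l * τ k)
    (hτ2 : ∀ l, 1 ≤ l → l ≤ n - 1 → τ l * τ l = 1)
    (hbraid : ∀ k, 1 ≤ k → k + 1 ≤ n - 1 →
      τ (k + 1) * τ k * τ (k + 1) = τ k * τ (k + 1) * τ k)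
    (hτx : ∀ k l, 1 ≤ k → k ≤ n - 1 → 1 ≤ l → l ≤ n →
      τ k * x l - x (if l = k then k + 1 else if l = k + 1 then k else l) * τ k =
        (if l = k + 1 then hbar else 0) - (if l = k then hbar else 0)) :
    (∀ k, 1 ≤ k → k + 1 ≤ n - 1 →
      ((x k - x (k + 1)) * τ k + hbar) * ((x (k + 1) - x (k + 2)) * τ (k + 1) + hbar) *
          ((x k - x (k + 1)) * τ k + hbar) =
        ((x (k + 1) - x (k + 2)) * τ (k + 1) + hbar) * ((x k - x (k + 1)) * τ k + hbar) *
          ((x (k + 1) - x (k + 2)) * τ (k + 1) + hbar)) ∧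
    (∀ k l, 1 ≤ k → k ≤ n - 1 → 1 ≤ l → l ≤ n - 1 → (k + 1 < l ∨ l + 1 < k) →
      ((x k - x (k + 1)) * τ k + hbar) * ((x l - x (l + 1)) * τ l + hbar) =
        ((x l - x (l + 1)) * τ l + hbar) * ((x k - x (k + 1)) * τ k + hbar)) := by
  have hcen' : ∀ r, Commute r hbar := fun r => (hcen r).symm
  have rel : ∀ k l, 1 ≤ k → k ≤ n - 1 → 1 ≤ l → l ≤ n → HeckeCrossRel hbar x τ k l := hτx
  refine ⟨fun k hk hkn => ?_, fun k l hk hkn hl hln hkl => ?_⟩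
  · refine intertwiner_braid hcen' (hxx (k + 1) k ?_ ?_ ?_ ?_) (hxx (k + 2) k ?_ ?_ ?_ ?_)
      (hxx (k + 2) (k + 1) ?_ ?_ ?_ ?_) (hτ2 k ?_ ?_) (hτ2 (k + 1) ?_ ?_) (hbraid k hk hkn)
      (rel k k ?_ ?_ ?_ ?_).mul_self (rel k (k + 1) ?_ ?_ ?_ ?_).mul_succ
      ((rel k (k + 2) ?_ ?_ ?_ ?_).commute ?_ ?_) ((rel (k + 1) k ?_ ?_ ?_ ?_).commute ?_ ?_)
      (rel (k + 1) (k + 1) ?_ ?_ ?_ ?_).mul_self (rel (k + 1) (k + 2) ?_ ?_ ?_ ?_).mul_succ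
    all_goals omega
  · have hττ' : Commute (τ k) (τ l) := by
      rcases hkl with hkl | hkl
      exacts [hττ k l hk hkn hl hln hkl, (hττ l k hl hln hk hkn hkl).symm]
    refine (commute_intertwiners hcen' (hxx k l ?_ ?_ ?_ ?_) (hxx k (l + 1) ?_ ?_ ?_ ?_)
      ((rel l k ?_ ?_ ?_ ?_).commute ?_ ?_).symm (hxx (k + 1) l ?_ ?_ ?_ ?_)
      (hxx (k + 1) (l + 1) ?_ ?_ ?_ ?_) ((rel l (k + 1) ?_ ?_ ?_ ?_).commute ?_ ?_).symm
      ((rel k l ?_ ?_ ?_ ?_).commute ?_ ?_) ((rel k (l + 1) ?_ ?_ ?_ ?_).commute ?_ ?_) hττ').eq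
    all_goals omega
end

section
/- Fix positive integers r and n. Let 𝒫_n(r) be the set of all partitions μ such that ℓ(μ) + Σ_i ⌊μ_i/r⌋ ≤ n, where ℓ(μ) is the number of parts. Then the cardinality of 𝒫_n(r) equals the number of r-multipartitions of n, i.e. the number of r-tuples (λ^{(1)},…,λ^{(r)}) of partitions with |λ^{(1)}| + ⋯ + |λ^{(r)}| = n. -/
/-!
Write each part as `m = q r + p` with `0 ≤ p < r`; then `⌊m/r⌋ + 1 = q + 1`, so the defining
condition of `𝒫_n(r)` says that the parts have total weight at most `n` when `m` weighs `⌊m/r⌋ + 1`.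
Sorting the parts by residue `p` and replacing each by `q + 1` turns `μ` into an `r`-multipartition
of that weight. The only missing pairs `(p, q + 1) = (0, 1)` come from the part `m = 0`, which has
weight `1`: padding with zeros up to weight exactly `n` (and discarding them again) makes the
correspondence bijective onto all `r`-multipartitions of `n`.
-/

open Multiset

namespace Multiset

variable {α β ι : Type*}

theorem filter_finset_sum (s : Finset ι) (f : ι → Multiset α) (p : α → Prop) [DecidablePred p] :
    (∑ i ∈ s, f i).filter p = ∑ i ∈ s, (f i).filter p := by
  classical
  induction s using Finset.induction_on with
  | empty => simp
  | insert a s ha ih => simp [Finset.sum_insert ha, filter_add, ih]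

theorem sum_fiberwise [Fintype ι] [DecidableEq ι] (s : Multiset α) (g : α → ι) :
    ∑ i, s.filter (fun a => g a = i) = s := by
  classical
  ext a
  rw [count_sum', Finset.sum_eq_single (g a)]
  · simp
  · intro i _ hi
    exact count_filter_of_neg (Ne.symm hi)
  · simp

def prodEquivPi (β ι : Type*) [Fintype ι] [DecidableEq ι] :
    Multiset (β × ι) ≃ (ι → Multiset β) where
  toFun s i := (s.filter (·.2 = i)).map Prod.fst
  invFun f := ∑ i, (f i).map (·, i)
  left_inv s := by
    conv_rhs => rw [← sum_fiberwise s Prod.snd]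
    refine Finset.sum_congr rfl fun i _ => ?_
    rw [map_map]
    conv_rhs => rw [← map_id (filter _ s)]
    refine map_congr rfl fun x hx => ?_
    simp [← (mem_filter.1 hx).2]
  right_inv f := by
    funext i
    dsimp only
    rw [filter_finset_sum, Finset.sum_eq_single i]
    · simp [filter_map, map_map]
    · intro j _ hj
      simp [filter_map, hj]
    · simp

theorem sum_map_finset_sum {M : Type*} [AddCommMonoid M] (t : Finset ι) (f : ι → Multiset α)
    (g : α → M) : ((∑ i ∈ t, f i).map g).sum = ∑ i ∈ t, ((f i).map g).sum :=
  map_sum (sumAddMonoidHom.comp (mapAddMonoidHom g)) f t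

theorem sum_map_prodEquivPi [Fintype ι] [DecidableEq ι] {M : Type*} [AddCommMonoid M]
    (s : Multiset (β × ι)) (g : β → M) :
    ∑ i, ((prodEquivPi β ι s i).map g).sum = (s.map (g ∘ Prod.fst)).sum := by
  conv_rhs => rw [← sum_fiberwise s Prod.snd, sum_map_finset_sum]
  simp [prodEquivPi, map_map]

theorem sum_map_filter_ne_add_count [DecidableEq α] {z : α} {w : α → ℕ} (hz : w z = 1)
    (t : Multiset α) : ((t.filter (· ≠ z)).map w).sum + count z t = (t.map w).sum := by
  conv_rhs => rw [← filter_add_not (· ≠ z) t]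
  simp [filter_eq', hz]

theorem map_succ_map_pred {s : Multiset ℕ} (hs : ∀ m ∈ s, 0 < m) :
    (s.map (· - 1)).map (· + 1) = s := by
  rw [map_map]
  conv_rhs => rw [← map_id s]
  exact map_congr rfl fun m hm => Nat.sub_add_cancel (hs m hm)

def padEquiv [DecidableEq α] (z : α) (w : α → ℕ) (hz : w z = 1) (n : ℕ) :
    {s : Multiset α // z ∉ s ∧ (s.map w).sum ≤ n} ≃ {t : Multiset α // (t.map w).sum = n} where
  toFun s := ⟨s.1 + replicate (n - (s.1.map w).sum) z, by simp [hz, s.2.2]⟩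
  invFun t := ⟨t.1.filter (· ≠ z), by simp,
    (Nat.le_add_right _ _).trans_eq ((sum_map_filter_ne_add_count hz t.1).trans t.2)⟩
  left_inv s := by
    ext1
    simp [filter_add, filter_eq_self.2 fun a ha => ne_of_mem_of_not_mem ha s.2.1,
      filter_eq_nil.2 fun a ha => not_not.2 (eq_of_mem_replicate ha)]
  right_inv t := by
    obtain ⟨t, rfl⟩ := t
    ext1
    dsimp only
    rw [← sum_map_filter_ne_add_count hz t, Nat.add_sub_cancel_left, ← filter_eq', add_comm]
    exact filter_add_not (· = z) t

end Multiset

def piMapSuccEquiv (ι : Type*) [Fintype ι] (n : ℕ) :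
    {f : ι → Multiset ℕ // ∑ i, ((f i).map (· + 1)).sum = n} ≃
      {g : ι → Multiset ℕ // (∀ i, ∀ m ∈ g i, 0 < m) ∧ ∑ i, (g i).sum = n} where
  toFun f := ⟨fun i => (f.1 i).map (· + 1), by simp, f.2⟩
  invFun g := ⟨fun i => (g.1 i).map (· - 1), by simp only [map_succ_map_pred (g.2.1 _), g.2.2]⟩
  left_inv f := by ext1; funext i; simp [map_map]
  right_inv g := by ext1; funext i; exact map_succ_map_pred (g.2.1 i)

theorem stmt14_general (r n : ℕ) (hr : 0 < r) :
    Nat.card {μ : Multiset ℕ //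
        (∀ m ∈ μ, 0 < m) ∧ Multiset.card μ + (μ.map (fun m => m / r)).sum ≤ n} =
      Nat.card {lam : Fin r → Multiset ℕ //
        (∀ p, ∀ m ∈ lam p, 0 < m) ∧ (∑ p, (lam p).sum) = n} := by
  have : NeZero r := ⟨hr.ne'⟩
  let weight : ℕ → ℕ := fun m => m / r + 1
  let residues : Multiset ℕ ≃ (Fin r → Multiset ℕ) :=
    (Functor.mapEquiv Multiset (Nat.divModEquiv r)).trans (prodEquivPi ℕ (Fin r))
  have residues_weight (μ : Multiset ℕ) :
      ∑ p, ((residues μ p).map (· + 1)).sum = (μ.map weight).sum := by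
    simp only [residues, Equiv.trans_apply, Functor.mapEquiv_apply, fmap_def,
      sum_map_prodEquivPi, map_map]
    rfl
  calc _ = Nat.card {μ : Multiset ℕ // 0 ∉ μ ∧ (μ.map weight).sum ≤ n} := by
        refine Nat.card_congr (Equiv.subtypeEquivRight fun μ => and_congr ?_ ?_)
        · exact ⟨fun h h0 => (h 0 h0).false,
            fun h m hm => Nat.pos_of_ne_zero (ne_of_mem_of_not_mem hm h)⟩
        · simp [weight, sum_map_add, add_comm]
    _ = Nat.card {μ : Multiset ℕ // (μ.map weight).sum = n} :=
        Nat.card_congr (padEquiv 0 weight (by simp [weight]) n)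
    _ = Nat.card {f : Fin r → Multiset ℕ // ∑ p, ((f p).map (· + 1)).sum = n} :=
        Nat.card_congr (residues.subtypeEquiv fun μ => by rw [residues_weight])
    _ = _ := Nat.card_congr (piMapSuccEquiv (Fin r) n)

/-- Fix positive integers `r` and `n`.  The number of partitions `μ` (encoded as
multisets of positive integers) with `ℓ(μ) + Σᵢ ⌊μᵢ/r⌋ ≤ n` equals the number of
`r`-multipartitions of `n`, i.e. `r`-tuples of partitions whose sizes sum to `n`. -/
theorem stmt14 (r n : ℕ) (hr : 0 < r) (hn : 0 < n) :
    Nat.card {μ : Multiset ℕ //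
        (∀ m ∈ μ, 0 < m) ∧ Multiset.card μ + (μ.map (fun m => m / r)).sum ≤ n} =
      Nat.card {lam : Fin r → Multiset ℕ //
        (∀ p, ∀ m ∈ lam p, 0 < m) ∧ (∑ p, (lam p).sum) = n} :=
  stmt14_general r n hr
end
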